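/- arXiv:0706.0121 — 6 statements merged into one kernel-verified Lean document; each statement's English description precedes it below -/
import Mathlib

section
/- Let a > 1 be a real number, γ a positive natural number, and b a real number with |b| ≤ γ. Then for every point (x_1,...,x_γ) in [-1,1]^γ with x_1 + ... + x_γ = b, the product ∏_{k=1}^γ (a - x_k) is at least ((a-1)/(a+1))^((b+2δ)/2) · (a²-1)^(γ/2), where δ = 0 if b is an integer and δ = 1 otherwise. -/
/-!
Write `a - t` as the convex combination `(1 + t)/2 · (a - 1) + (1 - t)/2 · (a + 1)`. Weighted
AM-GM bounds it below by `(a - 1)^((1 + t)/2) (a + 1)^((1 - t)/2) = r^(t/2) √(a² - 1)` with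
`r = (a - 1)/(a + 1)`. Multiplying over the coordinates turns `∏ r^(x_k/2)` into `r^(b/2)`, and
since `r < 1`, raising the exponent by `δ ≥ 0` only decreases `r^((b + 2δ)/2)`.
-/

open Real Finset

lemma rpow_mul_rpow_le_sub {a t : ℝ} (ha : 1 ≤ a) (ht : t ∈ Set.Icc (-1 : ℝ) 1) :
    (a - 1) ^ ((1 + t) / 2) * (a + 1) ^ ((1 - t) / 2) ≤ a - t := by
  obtain ⟨hl, hu⟩ := ht
  calc (a - 1) ^ ((1 + t) / 2) * (a + 1) ^ ((1 - t) / 2)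
      ≤ (1 + t) / 2 * (a - 1) + (1 - t) / 2 * (a + 1) :=
        geom_mean_le_arith_mean2_weighted (by linarith) (by linarith) (by linarith)
          (by linarith) (by ring)
    _ = a - t := by ring

lemma rpow_mul_rpow_eq_div_rpow_mul_sqrt {a : ℝ} (ha : 1 < a) (t : ℝ) :
    (a - 1) ^ ((1 + t) / 2) * (a + 1) ^ ((1 - t) / 2) =
      ((a - 1) / (a + 1)) ^ (t / 2) * (a ^ 2 - 1) ^ ((1 : ℝ) / 2) := by
  have h₁ : 0 < a - 1 := by linarith
  have h₂ : 0 < a + 1 := by linarith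
  rw [div_rpow h₁.le h₂.le, show a ^ 2 - 1 = (a - 1) * (a + 1) by ring, mul_rpow h₁.le h₂.le,
    show (1 + t) / 2 = t / 2 + 1 / 2 by ring, show (1 - t) / 2 = 1 / 2 - t / 2 by ring,
    rpow_add h₁, rpow_sub h₂]
  field_simp

lemma div_rpow_mul_sqrt_le_sub {a t : ℝ} (ha : 1 < a) (ht : t ∈ Set.Icc (-1 : ℝ) 1) :
    ((a - 1) / (a + 1)) ^ (t / 2) * (a ^ 2 - 1) ^ ((1 : ℝ) / 2) ≤ a - t :=
  rpow_mul_rpow_eq_div_rpow_mul_sqrt ha t ▸ rpow_mul_rpow_le_sub ha.le ht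

lemma div_rpow_sum_mul_le_prod_sub {ι : Type*} [Fintype ι] {a : ℝ} (ha : 1 < a) (x : ι → ℝ)
    (hx : ∀ i, x i ∈ Set.Icc (-1 : ℝ) 1) :
    ((a - 1) / (a + 1)) ^ ((∑ i, x i) / 2) * (a ^ 2 - 1) ^ ((Fintype.card ι : ℝ) / 2) ≤
      ∏ i, (a - x i) := by
  have hr : 0 < (a - 1) / (a + 1) := div_pos (by linarith) (by linarith)
  have hc : 0 ≤ a ^ 2 - 1 := by nlinarith
  have hprod : ((a - 1) / (a + 1)) ^ ((∑ i, x i) / 2) * (a ^ 2 - 1) ^ ((Fintype.card ι : ℝ) / 2) =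
      ∏ i, ((a - 1) / (a + 1)) ^ (x i / 2) * (a ^ 2 - 1) ^ ((1 : ℝ) / 2) := by
    rw [prod_mul_distrib, prod_const, card_univ, sum_div, rpow_sum_of_pos hr,
      ← rpow_mul_natCast hc]
    ring_nf
  rw [hprod]
  exact prod_le_prod (fun i _ => by positivity) (fun i _ => div_rpow_mul_sqrt_le_sub ha (hx i))

open scoped Classical in
theorem stmt_0_general (a b : ℝ) (ha : 1 < a) (γ : ℕ)
    (x : Fin γ → ℝ) (hx : ∀ k, x k ∈ Set.Icc (-1 : ℝ) 1) (hsum : ∑ k, x k = b) :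
    ((a - 1) / (a + 1)) ^ ((b + 2 * (if ∃ m : ℤ, (m : ℝ) = b then (0 : ℝ) else 1)) / 2) *
      (a ^ 2 - 1) ^ ((γ : ℝ) / 2) ≤ ∏ k, (a - x k) := by
  have hr : (a - 1) / (a + 1) ≤ 1 := (div_le_one (by linarith)).2 (by linarith)
  have hδ : ((a - 1) / (a + 1)) ^ ((b + 2 * (if ∃ m : ℤ, (m : ℝ) = b then (0 : ℝ) else 1)) / 2)
      ≤ ((a - 1) / (a + 1)) ^ (b / 2) :=
    rpow_le_rpow_of_exponent_ge (div_pos (by linarith) (by linarith)) hr (by split_ifs <;> linarith)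
  calc _ ≤ ((a - 1) / (a + 1)) ^ (b / 2) * (a ^ 2 - 1) ^ ((γ : ℝ) / 2) :=
        mul_le_mul_of_nonneg_right hδ (rpow_nonneg (by nlinarith) _)
    _ ≤ ∏ k, (a - x k) := by
      simpa [hsum] using div_rpow_sum_mul_le_prod_sub ha x hx

open scoped Classical in
theorem stmt_0 (a b : ℝ) (ha : 1 < a) (γ : ℕ) (hγ : 0 < γ) (hb : |b| ≤ (γ : ℝ))
    (x : Fin γ → ℝ) (hx : ∀ k, x k ∈ Set.Icc (-1 : ℝ) 1) (hsum : ∑ k, x k = b) :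
    ((a - 1) / (a + 1)) ^ ((b + 2 * (if ∃ m : ℤ, (m : ℝ) = b then (0 : ℝ) else 1)) / 2) *
      (a ^ 2 - 1) ^ ((γ : ℝ) / 2) ≤ ∏ k, (a - x k) :=
  stmt_0_general a b ha γ x hx hsum
end

section
/- Let a > 1 be a real number, γ a positive natural number, and b a real number with |b| ≤ γ. Then the supremum of ∏_{k=1}^γ (a - x_k) over all (x_1,...,x_γ) ∈ [-1,1]^γ with Σ x_k = b equals (a - b/γ)^γ, i.e., the bound (a - b/γ)^γ is attained. -/
/-! AM-GM: the factors `a - x k` are nonnegative because `a > 1 ≥ x k`, and their sum is fixed at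
`γ a - b`, so their product is at most `(a - b/γ)^γ`; the constant point `x k = b/γ`, which lies in
`[-1, 1]` because `|b| ≤ γ`, attains this bound. -/

open Real Finset

theorem Real.prod_le_pow_of_sum_eq_card_mul {ι : Type*} {s : Finset ι} {z : ι → ℝ} {m : ℝ}
    (hz : ∀ i ∈ s, 0 ≤ z i) (hsum : ∑ i ∈ s, z i = #s * m) : ∏ i ∈ s, z i ≤ m ^ #s := by
  rcases s.eq_empty_or_nonempty with rfl | hs
  · simp
  have hcard : (0 : ℝ) < #s := by exact_mod_cast hs.card_pos
  have amgm := Real.geom_mean_le_arith_mean s (fun _ => 1) z (fun _ _ => zero_le_one)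
    (by simpa using hcard) hz
  simp only [sum_const, nsmul_eq_mul, mul_one, one_mul, rpow_one, hsum,
    mul_div_cancel_left₀ m hcard.ne'] at amgm
  have hprod : 0 ≤ ∏ i ∈ s, z i := prod_nonneg hz
  calc ∏ i ∈ s, z i = ((∏ i ∈ s, z i) ^ ((#s : ℝ)⁻¹)) ^ (#s : ℝ) := by
        rw [← rpow_mul hprod, inv_mul_cancel₀ hcard.ne', rpow_one]
    _ ≤ m ^ (#s : ℝ) := rpow_le_rpow (rpow_nonneg hprod _) amgm (Nat.cast_nonneg _)
    _ = m ^ #s := rpow_natCast m #s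

theorem stmt_2_general (a b : ℝ) (ha : 1 < a) (γ : ℕ) (hb : |b| ≤ (γ : ℝ)) :
    IsGreatest {p : ℝ | ∃ x : Fin γ → ℝ, (∀ k, x k ∈ Set.Icc (-1 : ℝ) 1) ∧
      ∑ k, x k = b ∧ p = ∏ k, (a - x k)} ((a - b / γ) ^ γ) := by
  have hb_eq : (γ : ℝ) * (b / γ) = b := by
    rcases Nat.eq_zero_or_pos γ with rfl | hγ
    · simpa [eq_comm] using hb
    · field_simp
  have hmean : |b / γ| ≤ 1 := by
    rw [abs_div, Nat.abs_cast]
    exact div_le_one_of_le₀ hb (Nat.cast_nonneg γ)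
  refine ⟨⟨fun _ => b / γ, fun _ => abs_le.mp hmean, by simpa using hb_eq, by simp⟩, ?_⟩
  rintro p ⟨x, hx, hsum, rfl⟩
  have hsum' : ∑ k, (a - x k) = #(univ : Finset (Fin γ)) * (a - b / γ) := by
    rw [sum_sub_distrib, hsum, card_fin, mul_sub, hb_eq]
    simp
  simpa using Real.prod_le_pow_of_sum_eq_card_mul (fun k _ => by linarith [(hx k).2]) hsum'

theorem stmt_2 (a b : ℝ) (ha : 1 < a) (γ : ℕ) (hγ : 0 < γ) (hb : |b| ≤ (γ : ℝ)) :
    IsGreatest {p : ℝ | ∃ x : Fin γ → ℝ, (∀ k, x k ∈ Set.Icc (-1 : ℝ) 1) ∧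
      ∑ k, x k = b ∧ p = ∏ k, (a - x k)} ((a - b / γ) ^ γ) :=
  stmt_2_general a b ha γ hb
end

section
/- Let q > 1 be a real number with (q+1)/(2√q) > 1, let γ be a positive natural number, and let θ_1, ..., θ_γ be real numbers such that b := Σ_{k=1}^γ cos θ_k is an integer. Then ∏_{k=1}^γ (q + 1 - 2√q cos θ_k) ≥ ((√q+1)/(√q-1))^{-b} · (q-1)^γ. -/
/-! With `s = √q` and `c = (s + 1) / (s - 1)`, each factor satisfies
`q + 1 - 2 s x ≥ (q - 1) c ^ (-x)` for `x ∈ [-1, 1]`: by convexity of `t ↦ c ^ t`, the power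
`c ^ (-x)` lies below the chord through `t = ±1`, and `(q - 1) c = (s + 1) ^ 2`,
`(q - 1) c⁻¹ = (s - 1) ^ 2` turn that chord into the affine function `q + 1 - 2 s x`.
Multiplying over `k` gives the claim, the exponents adding up to `-b`. -/

open Real Finset

theorem Real.rpow_le_chord {c x : ℝ} (hc : 0 < c) (hx₁ : -1 ≤ x) (hx₂ : x ≤ 1) :
    c ^ x ≤ (1 + x) / 2 * c + (1 - x) / 2 * c⁻¹ := by
  have h := (convexOn_rpow_left hc).2 (Set.mem_univ 1) (Set.mem_univ (-1))
    (by linarith : 0 ≤ (1 + x) / 2) (by linarith : 0 ≤ (1 - x) / 2) (by ring)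
  simp only [smul_eq_mul, rpow_one, rpow_neg_one] at h
  rwa [show (1 + x) / 2 * 1 + (1 - x) / 2 * -1 = x by ring] at h

theorem sq_sub_one_mul_rpow_neg_le {s x : ℝ} (hs : 1 < s) (hx₁ : -1 ≤ x) (hx₂ : x ≤ 1) :
    (s ^ 2 - 1) * ((s + 1) / (s - 1)) ^ (-x) ≤ s ^ 2 + 1 - 2 * s * x := by
  have hc : 0 < (s + 1) / (s - 1) := div_pos (by linarith) (by linarith)
  have hs₁ : s - 1 ≠ 0 := by linarith
  have hs₂ : s + 1 ≠ 0 := by linarith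
  have hchord := Real.rpow_le_chord hc (neg_le_neg hx₂) (by linarith : -x ≤ 1)
  rw [sub_neg_eq_add, ← sub_eq_add_neg, inv_div] at hchord
  calc (s ^ 2 - 1) * ((s + 1) / (s - 1)) ^ (-x)
      ≤ (s ^ 2 - 1) * ((1 - x) / 2 * ((s + 1) / (s - 1)) + (1 + x) / 2 * ((s - 1) / (s + 1))) :=
        mul_le_mul_of_nonneg_left hchord (by nlinarith)
    _ = s ^ 2 + 1 - 2 * s * x := by
        field_simp
        ring

theorem rpow_neg_sum_mul_le_prod {ι : Type*} [Fintype ι] {s : ℝ} (hs : 1 < s) (x : ι → ℝ)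
    (hx : ∀ i, x i ∈ Set.Icc (-1) 1) :
    ((s + 1) / (s - 1)) ^ (-∑ i, x i) * (s ^ 2 - 1) ^ Fintype.card ι ≤
      ∏ i, (s ^ 2 + 1 - 2 * s * x i) := by
  have hc : 0 < (s + 1) / (s - 1) := div_pos (by linarith) (by linarith)
  rw [← sum_neg_distrib, rpow_sum_of_pos hc, ← card_univ, ← prod_const, ← prod_mul_distrib]
  refine prod_le_prod (fun i _ => mul_nonneg (rpow_nonneg hc.le _) (by nlinarith)) fun i _ => ?_
  rw [mul_comm]
  exact sq_sub_one_mul_rpow_neg_le hs (hx i).1 (hx i).2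

theorem stmt_6_general (q : ℝ) (hq : 1 < q)
    (γ : ℕ) (θ : Fin γ → ℝ) (b : ℝ)
    (hb : b = ∑ k, Real.cos (θ k)) :
    ((Real.sqrt q + 1) / (Real.sqrt q - 1)) ^ (-b) * (q - 1) ^ γ ≤
      ∏ k, (q + 1 - 2 * Real.sqrt q * Real.cos (θ k)) := by
  have hsq : Real.sqrt q ^ 2 = q := sq_sqrt (by linarith)
  have hs : 1 < Real.sqrt q := by rwa [lt_sqrt zero_le_one, one_pow]
  have h := rpow_neg_sum_mul_le_prod hs (fun k => Real.cos (θ k))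
    fun k => ⟨neg_one_le_cos (θ k), cos_le_one (θ k)⟩
  rwa [hsq, Fintype.card_fin, ← hb] at h

theorem stmt_6 (q : ℝ) (hq : 1 < q) (ha : 1 < (q + 1) / (2 * Real.sqrt q))
    (γ : ℕ) (hγ : 0 < γ) (θ : Fin γ → ℝ) (b : ℝ)
    (hb : b = ∑ k, Real.cos (θ k)) (hbint : ∃ m : ℤ, (m : ℝ) = b) :
    ((Real.sqrt q + 1) / (Real.sqrt q - 1)) ^ (-b) * (q - 1) ^ γ ≤
      ∏ k, (q + 1 - 2 * Real.sqrt q * Real.cos (θ k)) :=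
  stmt_6_general q hq γ θ b hb
end

section
/- Let a > 1 be real and γ a positive natural number. The function F(x) = Σ_{k=1}^γ log(a - x_k) is strictly concave on the convex set [-1,1]^γ... equivalently: the function G(x_1,...,x_γ) = ∏_{k=1}^γ (a - x_k) restricted to {x ∈ [-1,1]^γ : Σ x_k = b} attains its minimum at a point all of whose coordinates except possibly one lie in {-1, 1}. -/
/-!
The feasible set is compact and nonempty, so the product attains its minimum on it. At a
minimiser no two coordinates `x i, x j` can lie in `(-1, 1)`: replacing them by `u` and
`x i + x j - u`, with `u = max (-1) (x i + x j - 1)` as small as the box allows, keeps the sum and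
the box constraints, and since `x i * x j - u * (x i + x j - u) = (x i - u) * (x j - u) > 0`
it strictly decreases `(a - x i) * (a - x j)`, hence the whole (positive) product.
-/

open Finset

theorem exists_mem_Icc_add_eq_mul_lt {p q : ℝ} (hp : p ∈ Set.Ioo (-1 : ℝ) 1)
    (hq : q ∈ Set.Ioo (-1 : ℝ) 1) (a : ℝ) :
    ∃ u v, u ∈ Set.Icc (-1 : ℝ) 1 ∧ v ∈ Set.Icc (-1 : ℝ) 1 ∧ u + v = p + q ∧
      (a - u) * (a - v) < (a - p) * (a - q) := by
  obtain ⟨hp₁, hp₂⟩ := hp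
  obtain ⟨hq₁, hq₂⟩ := hq
  set u := max (-1) (p + q - 1)
  have hup : u < p := max_lt (by linarith) (by linarith)
  have huq : u < q := max_lt (by linarith) (by linarith)
  refine ⟨u, p + q - u, ⟨le_max_left _ _, by linarith⟩, ⟨?_, ?_⟩, by ring, ?_⟩
  · linarith [show u ≤ p + q + 1 from max_le (by linarith) (by linarith)]
  · linarith [le_max_right (-1 : ℝ) (p + q - 1)]
  · linear_combination mul_pos (sub_pos.mpr hup) (sub_pos.mpr huq)

def cubeSlice (ι : Type*) [Fintype ι] (b : ℝ) : Set (ι → ℝ) :=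
  {x | (∀ k, x k ∈ Set.Icc (-1 : ℝ) 1) ∧ ∑ k, x k = b}

section

variable {ι : Type*} [Fintype ι]

theorem isCompact_cubeSlice (b : ℝ) : IsCompact (cubeSlice ι b) := by
  have hcube : IsCompact (Set.univ.pi fun _ : ι => Set.Icc (-1 : ℝ) 1) :=
    isCompact_univ_pi fun _ => isCompact_Icc
  have hplane : IsClosed {x : ι → ℝ | ∑ k, x k = b} :=
    isClosed_eq (by fun_prop) continuous_const
  convert hcube.inter_right hplane using 1
  ext x
  simp only [cubeSlice, Set.mem_inter_iff, Set.mem_univ_pi, Set.mem_ofPred_eq]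

theorem cubeSlice_nonempty {b : ℝ} (hb : |b| ≤ Fintype.card ι) : (cubeSlice ι b).Nonempty := by
  rcases (Fintype.card ι).eq_zero_or_pos with hι | hι
  · have hb0 : b = 0 := abs_nonpos_iff.mp (by simpa [hι] using hb)
    exact ⟨0, fun k => by simp, by simp [hb0]⟩
  · have hcard : (0 : ℝ) < Fintype.card ι := Nat.cast_pos.mpr hι
    refine ⟨fun _ => b / Fintype.card ι, fun _ => ?_, ?_⟩
    · rw [Set.mem_Icc, le_div_iff₀ hcard, div_le_iff₀ hcard]
      constructor <;> linarith [abs_le.mp hb]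
    · simp only [sum_const, card_univ, nsmul_eq_mul]
      field_simp

@[to_additive]
theorem prod_eq_mul_mul_prod_sdiff_pair {M : Type*} [CommMonoid M] [DecidableEq ι] (f : ι → M)
    {i j : ι} (hij : i ≠ j) : ∏ k, f k = f i * f j * ∏ k ∈ univ \ {i, j}, f k := by
  rw [← prod_sdiff (subset_univ {i, j}), prod_pair hij, mul_comm]

theorem exists_mem_cubeSlice_prod_sub_lt {a b : ℝ} (ha : 1 < a)
    {x : ι → ℝ} (hx : x ∈ cubeSlice ι b) {i j : ι} (hij : i ≠ j)
    (hi : x i ∈ Set.Ioo (-1 : ℝ) 1) (hj : x j ∈ Set.Ioo (-1 : ℝ) 1) :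
    ∃ y ∈ cubeSlice ι b, ∏ k, (a - y k) < ∏ k, (a - x k) := by
  classical
  obtain ⟨u, v, hu, hv, huv, hlt⟩ := exists_mem_Icc_add_eq_mul_lt hi hj a
  set y := Function.update (Function.update x i u) j v
  have hyi : y i = u := by simp [y, Function.update_of_ne hij]
  have hyj : y j = v := by simp [y]
  have hyk : ∀ k ∈ univ \ {i, j}, y k = x k := fun k hk => by
    simp only [mem_sdiff, mem_univ, mem_insert, mem_singleton, true_and, not_or] at hk
    simp [y, Function.update_of_ne hk.1, Function.update_of_ne hk.2]
  have hy : y ∈ cubeSlice ι b := by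
    refine ⟨fun k => ?_, ?_⟩
    · by_cases hkj : k = j
      · rwa [hkj, hyj]
      by_cases hki : k = i
      · rwa [hki, hyi]
      · simpa [y, hki, hkj] using hx.1 k
    · rw [sum_eq_add_add_sum_sdiff_pair y hij, hyi, hyj, huv, sum_congr rfl hyk,
        ← sum_eq_add_add_sum_sdiff_pair x hij, hx.2]
  have hrest : 0 < ∏ k ∈ univ \ {i, j}, (a - x k) :=
    prod_pos fun k _ => by linarith [(hx.1 k).2]
  refine ⟨y, hy, ?_⟩
  rw [prod_eq_mul_mul_prod_sdiff_pair (fun k => a - y k) hij,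
    prod_eq_mul_mul_prod_sdiff_pair (fun k => a - x k) hij, hyi, hyj,
    prod_congr rfl fun k hk => by rw [hyk k hk]]
  exact mul_lt_mul_of_pos_right hlt hrest

theorem subsingleton_setOf_mem_Ioo_of_isMinOn {a b : ℝ} (ha : 1 < a)
    {x : ι → ℝ} (hx : x ∈ cubeSlice ι b)
    (hmin : IsMinOn (fun y => ∏ k, (a - y k)) (cubeSlice ι b) x) :
    {k | x k ∈ Set.Ioo (-1 : ℝ) 1}.Subsingleton := by
  intro i hi j hj
  by_contra hij
  obtain ⟨y, hy, hlt⟩ := exists_mem_cubeSlice_prod_sub_lt ha hx hij hi hj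
  exact (hmin hy).not_gt hlt

end

theorem stmt_10_general (a b : ℝ) (ha : 1 < a) (γ : ℕ) (hb : |b| ≤ (γ : ℝ)) :
    ∃ x : Fin γ → ℝ, (∀ k, x k ∈ Set.Icc (-1 : ℝ) 1) ∧ ∑ k, x k = b ∧
      (∀ y : Fin γ → ℝ, (∀ k, y k ∈ Set.Icc (-1 : ℝ) 1) → ∑ k, y k = b →
        ∏ k, (a - x k) ≤ ∏ k, (a - y k)) ∧
      {k : Fin γ | x k ∈ Set.Ioo (-1 : ℝ) 1}.Subsingleton := by
  have hne : (cubeSlice (Fin γ) b).Nonempty := cubeSlice_nonempty (by simpa using hb)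
  have hcont : Continuous fun x : Fin γ → ℝ => ∏ k, (a - x k) := by fun_prop
  obtain ⟨x, hx, hmin⟩ := (isCompact_cubeSlice b).exists_isMinOn hne hcont.continuousOn
  exact ⟨x, hx.1, hx.2, fun y hy₁ hy₂ => hmin ⟨hy₁, hy₂⟩,
    subsingleton_setOf_mem_Ioo_of_isMinOn ha hx hmin⟩

theorem stmt_10 (a b : ℝ) (ha : 1 < a) (γ : ℕ) (hγ : 0 < γ) (hb : |b| ≤ (γ : ℝ)) :
    ∃ x : Fin γ → ℝ, (∀ k, x k ∈ Set.Icc (-1 : ℝ) 1) ∧ ∑ k, x k = b ∧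
      (∀ y : Fin γ → ℝ, (∀ k, y k ∈ Set.Icc (-1 : ℝ) 1) → ∑ k, y k = b →
        ∏ k, (a - x k) ≤ ∏ k, (a - y k)) ∧
      {k : Fin γ | x k ∈ Set.Ioo (-1 : ℝ) 1}.Subsingleton :=
  stmt_10_general a b ha γ hb
end

section
/- Let a > 1, γ ≥ 1, and b real with |b| ≤ γ and b not an integer. Write {b} for the fractional part of b. Suppose x ∈ [-1,1]^γ has exactly one coordinate β in (-1,1), n coordinates equal to 1, and m coordinates equal to -1, with Σ x_k = b. Then n - m = b - β, n + m = γ - 1, and ∏_{k=1}^γ (a - x_k) = (a-β)·(a²-1)^{(γ-1)/2}·((a-1)/(a+1))^{(b-β)/2} ≥ ((a-1)/(a+1))^{(b+2)/2}·(a²-1)^{γ/2}. -/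
/-!
Removing the coordinate `β`, the remaining `n + m` coordinates are `±1`, so the product is
`(a - β) (a - 1)^n (a + 1)^m`, and `(a - 1)^n (a + 1)^m = (a² - 1)^((n+m)/2) r^((n-m)/2)` with
`r = (a - 1)/(a + 1)`. For the lower bound, `r < 1` and `(2 + β)/2 ≥ 1/2` give
`r^((2+β)/2) (a² - 1)^(1/2) ≤ r^(1/2) (a² - 1)^(1/2) = a - 1 ≤ a - β`.
-/

open Real Finset

section SignVector

variable {ι : Type*} [Fintype ι] [DecidableEq ι] {x : ι → ℝ} {i₀ : ι}

lemma erase_eq_filter_one_union_filter_neg_one (hother : ∀ k, k ≠ i₀ → x k = 1 ∨ x k = -1)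
    (h₁ : x i₀ ≠ 1) (h₂ : x i₀ ≠ -1) :
    univ.erase i₀ = univ.filter (fun k => x k = 1) ∪ univ.filter (fun k => x k = -1) := by
  ext k
  simp only [mem_erase, mem_univ, and_true, mem_union, mem_filter, true_and]
  constructor
  · exact hother k
  · rintro (hk | hk) rfl <;> contradiction

@[to_additive sum_comp_of_eq_one_or_neg_one]
lemma prod_comp_of_eq_one_or_neg_one {M : Type*} [CommMonoid M] (f : ℝ → M)
    (hother : ∀ k, k ≠ i₀ → x k = 1 ∨ x k = -1) (h₁ : x i₀ ≠ 1) (h₂ : x i₀ ≠ -1) :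
    ∏ k, f (x k) = f (x i₀) * f 1 ^ (univ.filter (fun k => x k = 1)).card *
      f (-1) ^ (univ.filter (fun k => x k = -1)).card := by
  have hdisj : Disjoint (univ.filter (fun k => x k = 1)) (univ.filter (fun k => x k = -1)) :=
    disjoint_filter.mpr fun k _ hk => by rw [hk]; norm_num
  rw [← mul_prod_erase univ _ (mem_univ i₀), erase_eq_filter_one_union_filter_neg_one hother h₁ h₂,
    prod_union hdisj, prod_eq_pow_card fun k hk => congrArg f (mem_filter.mp hk).2,
    prod_eq_pow_card fun k hk => congrArg f (mem_filter.mp hk).2, mul_assoc]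

end SignVector

lemma rpow_mul_rpow_eq_mul_rpow_mul_div_rpow {p q : ℝ} (hp : 0 < p) (hq : 0 < q) (s t : ℝ) :
    p ^ s * q ^ t = (p * q) ^ ((s + t) / 2) * (p / q) ^ ((s - t) / 2) := by
  rw [div_eq_mul_inv p q, mul_rpow hp.le (inv_nonneg.2 hq.le), inv_rpow hq.le, ← rpow_neg hq.le,
    mul_rpow hp.le hq.le, mul_mul_mul_comm, ← rpow_add hp, ← rpow_add hq]
  ring_nf

lemma rpow_mul_sqrt_le_sub {a β : ℝ} (ha : 1 < a) (hβ : β ∈ Set.Icc (-1 : ℝ) 1) :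
    ((a - 1) / (a + 1)) ^ ((2 + β) / 2) * (a ^ 2 - 1) ^ ((1 : ℝ) / 2) ≤ a - β := by
  have hr : 0 < (a - 1) / (a + 1) := div_pos (by linarith) (by linarith)
  have hr1 : (a - 1) / (a + 1) ≤ 1 := (div_le_one (by linarith)).mpr (by linarith)
  calc ((a - 1) / (a + 1)) ^ ((2 + β) / 2) * (a ^ 2 - 1) ^ ((1 : ℝ) / 2)
      ≤ ((a - 1) / (a + 1)) ^ ((1 : ℝ) / 2) * (a ^ 2 - 1) ^ ((1 : ℝ) / 2) := by
        refine mul_le_mul_of_nonneg_right ?_ (rpow_nonneg (by nlinarith) _)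
        exact rpow_le_rpow_of_exponent_ge hr hr1 (by linarith [hβ.1])
    _ = ((a - 1) ^ 2) ^ ((1 : ℝ) / 2) := by
        rw [← mul_rpow hr.le (by nlinarith)]
        congr 1
        field_simp
        ring
    _ = a - 1 := by
        rw [← rpow_natCast, ← rpow_mul (by linarith)]
        norm_num
    _ ≤ a - β := by linarith [hβ.2]

lemma rpow_add_mul_rpow_add_le {a β : ℝ} (ha : 1 < a) (hβ : β ∈ Set.Icc (-1 : ℝ) 1) (c d : ℝ) :
    ((a - 1) / (a + 1)) ^ (c + (2 + β) / 2) * (a ^ 2 - 1) ^ (d + 1 / 2) ≤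
      (a - β) * (a ^ 2 - 1) ^ d * ((a - 1) / (a + 1)) ^ c := by
  have hr : 0 < (a - 1) / (a + 1) := div_pos (by linarith) (by linarith)
  have hA : 0 < a ^ 2 - 1 := by nlinarith
  rw [rpow_add hr, rpow_add hA]
  calc _ = (((a - 1) / (a + 1)) ^ ((2 + β) / 2) * (a ^ 2 - 1) ^ ((1 : ℝ) / 2)) *
        ((a ^ 2 - 1) ^ d * ((a - 1) / (a + 1)) ^ c) := by ring
    _ ≤ (a - β) * ((a ^ 2 - 1) ^ d * ((a - 1) / (a + 1)) ^ c) :=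
        mul_le_mul_of_nonneg_right (rpow_mul_sqrt_le_sub ha hβ) (by positivity)
    _ = _ := by ring

theorem stmt_15_general (a b β : ℝ) (ha : 1 < a) (γ : ℕ)
    (x : Fin γ → ℝ)
    (i₀ : Fin γ) (hβ : β ∈ Set.Ioo (-1 : ℝ) 1) (hxi₀ : x i₀ = β)
    (hother : ∀ k, k ≠ i₀ → x k = 1 ∨ x k = -1)
    (n m : ℕ) (hn : n = (Finset.univ.filter (fun k => x k = 1)).card)
    (hm : m = (Finset.univ.filter (fun k => x k = -1)).card)
    (hsum : ∑ k, x k = b) :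
    (n : ℝ) - m = b - β ∧ n + m = γ - 1 ∧
      ∏ k, (a - x k) =
        (a - β) * (a ^ 2 - 1) ^ (((γ : ℝ) - 1) / 2) *
          ((a - 1) / (a + 1)) ^ ((b - β) / 2) ∧
      ((a - 1) / (a + 1)) ^ ((b + 2) / 2) * (a ^ 2 - 1) ^ ((γ : ℝ) / 2) ≤
        ∏ k, (a - x k) := by
  have h₁ : x i₀ ≠ 1 := by rw [hxi₀]; exact hβ.2.ne
  have h₂ : x i₀ ≠ -1 := by rw [hxi₀]; exact hβ.1.ne'
  have hcard : γ = 1 + n + m := by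
    simpa [← hn, ← hm] using sum_comp_of_eq_one_or_neg_one (fun _ => (1 : ℕ)) hother h₁ h₂
  have hdiff : (n : ℝ) - m = b - β := by
    have := sum_comp_of_eq_one_or_neg_one id hother h₁ h₂
    simp only [id, ← hn, ← hm, hsum, hxi₀, nsmul_eq_mul, mul_one, mul_neg] at this
    linarith
  have hγ : (γ : ℝ) - 1 = n + m := by rw [hcard]; push_cast; ring
  have hprod : ∏ k, (a - x k) =
      (a - β) * (a ^ 2 - 1) ^ (((γ : ℝ) - 1) / 2) * ((a - 1) / (a + 1)) ^ ((b - β) / 2) := by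
    rw [prod_comp_of_eq_one_or_neg_one (a - ·) hother h₁ h₂, ← hn, ← hm, hxi₀, mul_assoc,
      sub_neg_eq_add, ← rpow_natCast, ← rpow_natCast,
      rpow_mul_rpow_eq_mul_rpow_mul_div_rpow (by linarith) (by linarith), hγ, hdiff]
    ring_nf
  refine ⟨hdiff, by omega, hprod, ?_⟩
  rw [hprod]
  convert rpow_add_mul_rpow_add_le ha (Set.Ioo_subset_Icc_self hβ) ((b - β) / 2)
    (((γ : ℝ) - 1) / 2) using 3 <;> ring

theorem stmt_15 (a b β : ℝ) (ha : 1 < a) (γ : ℕ) (hγ : 1 ≤ γ)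
    (hb : |b| ≤ (γ : ℝ)) (hbint : ¬∃ m : ℤ, (m : ℝ) = b)
    (x : Fin γ → ℝ) (hx : ∀ k, x k ∈ Set.Icc (-1 : ℝ) 1)
    (i₀ : Fin γ) (hβ : β ∈ Set.Ioo (-1 : ℝ) 1) (hxi₀ : x i₀ = β)
    (hother : ∀ k, k ≠ i₀ → x k = 1 ∨ x k = -1)
    (n m : ℕ) (hn : n = (Finset.univ.filter (fun k => x k = 1)).card)
    (hm : m = (Finset.univ.filter (fun k => x k = -1)).card)
    (hsum : ∑ k, x k = b) :
    (n : ℝ) - m = b - β ∧ n + m = γ - 1 ∧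
      ∏ k, (a - x k) =
        (a - β) * (a ^ 2 - 1) ^ (((γ : ℝ) - 1) / 2) *
          ((a - 1) / (a + 1)) ^ ((b - β) / 2) ∧
      ((a - 1) / (a + 1)) ^ ((b + 2) / 2) * (a ^ 2 - 1) ^ ((γ : ℝ) / 2) ≤
        ∏ k, (a - x k) :=
  stmt_15_general a b β ha γ x i₀ hβ hxi₀ hother n m hn hm hsum
end

section
/- Let q > 1 be real, γ ≥ 1 a natural number, and θ_1,...,θ_γ real. Let b = Σ_{k=1}^γ cos θ_k and suppose b is not an integer. Then ∏_{k=1}^γ (q+1-2√q cos θ_k) ≥ ((√q+1)/(√q-1))^{-(b+2)} · (q-1)^γ. -/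
/-!
Write `s = √q` and `ρ = (s + 1) / (s - 1)`. For `x ∈ [-1, 1]`, weighted AM-GM with weights
`(1 + x) / 2` and `(1 - x) / 2` applied to `(s - 1)²` and `(s + 1)²` gives
`(s - 1)^(1 + x) (s + 1)^(1 - x) ≤ s² + 1 - 2 s x`, and the left side is `ρ^(-x) (q - 1)`.
Multiplying over `k` yields `ρ^(-b) (q - 1)^γ ≤ ∏ (q + 1 - 2 √q cos θ_k)`, and
`ρ^(-(b + 2)) ≤ ρ^(-b)` because `ρ > 1`.
-/

open Real Finset

lemma sq_rpow_mul_sq_rpow_eq {u v : ℝ} (hu : 0 < u) (hv : 0 < v) (x : ℝ) :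
    (u ^ 2) ^ ((1 + x) / 2) * (v ^ 2) ^ ((1 - x) / 2) = (v / u) ^ (-x) * (u * v) := by
  have hsq (w t : ℝ) (hw : 0 < w) : (w ^ 2) ^ ((1 + t) / 2) = w * w ^ t := by
    rw [← Real.rpow_natCast, ← Real.rpow_mul hw.le,
      show ((2 : ℕ) : ℝ) * ((1 + t) / 2) = 1 + t by push_cast; ring, Real.rpow_add hw,
      Real.rpow_one]
  rw [sub_eq_add_neg 1 x, hsq u x hu, hsq v (-x) hv, Real.div_rpow hv.le hu.le,
    Real.rpow_neg hu.le]
  field_simp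

lemma div_rpow_neg_mul_sq_sub_one_le {s x : ℝ} (hs : 1 < s) (hx₁ : -1 ≤ x) (hx₂ : x ≤ 1) :
    ((s + 1) / (s - 1)) ^ (-x) * (s ^ 2 - 1) ≤ s ^ 2 + 1 - 2 * s * x := by
  have amgm := Real.geom_mean_le_arith_mean2_weighted
    (by linarith : (0 : ℝ) ≤ (1 + x) / 2) (by linarith : (0 : ℝ) ≤ (1 - x) / 2)
    (sq_nonneg (s - 1)) (sq_nonneg (s + 1)) (by ring)
  rw [sq_rpow_mul_sq_rpow_eq (by linarith) (by linarith)] at amgm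
  linear_combination amgm

theorem stmt_17_general (q : ℝ) (hq : 1 < q) (γ : ℕ) (θ : Fin γ → ℝ)
    (b : ℝ) (hb : b = ∑ k, Real.cos (θ k)) :
    ((Real.sqrt q + 1) / (Real.sqrt q - 1)) ^ (-(b + 2)) * (q - 1) ^ γ ≤
      ∏ k, (q + 1 - 2 * Real.sqrt q * Real.cos (θ k)) := by
  set s := Real.sqrt q
  have hs : 1 < s := Real.lt_sqrt_of_sq_lt (by linarith)
  have hsq : s ^ 2 = q := Real.sq_sqrt (by linarith)
  set ρ := (s + 1) / (s - 1)
  have hρ : 1 ≤ ρ := (one_le_div (by linarith)).2 (by linarith)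
  calc ρ ^ (-(b + 2)) * (q - 1) ^ γ ≤ ρ ^ (-b) * (q - 1) ^ γ := by
        gcongr
        linarith
    _ = ∏ k, (ρ ^ (-Real.cos (θ k)) * (q - 1)) := by
        rw [prod_mul_distrib, prod_const, card_univ, Fintype.card_fin, hb, ← sum_neg_distrib,
          Real.rpow_sum_of_pos (by positivity)]
    _ ≤ ∏ k, (q + 1 - 2 * s * Real.cos (θ k)) := by
        refine prod_le_prod (fun _ _ => mul_nonneg (by positivity) (by linarith)) fun k _ => ?_
        rw [← hsq]
        exact div_rpow_neg_mul_sq_sub_one_le hs (neg_one_le_cos _) (cos_le_one _)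

theorem stmt_17 (q : ℝ) (hq : 1 < q) (γ : ℕ) (hγ : 1 ≤ γ) (θ : Fin γ → ℝ)
    (b : ℝ) (hb : b = ∑ k, Real.cos (θ k)) (hbint : ¬∃ m : ℤ, (m : ℝ) = b) :
    ((Real.sqrt q + 1) / (Real.sqrt q - 1)) ^ (-(b + 2)) * (q - 1) ^ γ ≤
      ∏ k, (q + 1 - 2 * Real.sqrt q * Real.cos (θ k)) :=
  stmt_17_general q hq γ θ b hb
end
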